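/- arXiv:1705.00607 — 2 statements merged into one kernel-verified Lean document; each statement's English description precedes it below -/
import Mathlib

section
/- If the inclusion indicators satisfy C_ij·⟨g(x_i), g(x_j)⟩ ≤ 0 for all i ≠ j, then Var(g*) ≤ (1/k²)∑_i (b_i − b_i²)‖g(x_i)‖², i.e., the variance is at most that of independent sampling with the same marginals. -/
open scoped RealInnerProductSpace

set_option maxHeartbeats 1000000 in
theorem stmt_9 {N k d : ℕ} (hk : 0 < k) (μ : Finset (Fin N) → ℝ)
    (hnn : ∀ B, 0 ≤ μ B) (hsum : ∑ B : Finset (Fin N), μ B = 1)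
    (b : Fin N → ℝ)
    (hb : ∀ i, b i = ∑ B ∈ (Finset.univ : Finset (Finset (Fin N))).filter
      (fun B => i ∈ B), μ B)
    (hbpos : ∀ i, 0 < b i)
    (C : Fin N → Fin N → ℝ)
    (hC : ∀ i j, i ≠ j → C i j =
      (∑ B ∈ (Finset.univ : Finset (Finset (Fin N))).filter
        (fun B => i ∈ B ∧ j ∈ B), μ B) / (b i * b j) - 1)
    (g : Fin N → EuclideanSpace ℝ (Fin d))
    (hneg : ∀ i j, i ≠ j → C i j * ⟪g i, g j⟫ ≤ 0) :
    ∑ B : Finset (Fin N),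
        μ B * ‖((1 / (k : ℝ)) • ∑ i ∈ B, g i) -
          ((1 / (k : ℝ)) • ∑ i : Fin N, b i • g i)‖ ^ 2 ≤
      (1 / (k : ℝ) ^ 2) * (∑ i : Fin N, (b i - b i ^ 2) * ‖g i‖ ^ 2) := by
  set m : EuclideanSpace ℝ (Fin d) := ∑ i : Fin N, b i • g i with hm
  set p : Fin N → Fin N → ℝ := fun i j =>
    ∑ B ∈ (Finset.univ : Finset (Finset (Fin N))).filter
      (fun B => i ∈ B ∧ j ∈ B), μ B with hp
  -- main inequality without the 1/k factors
  have key : ∑ B : Finset (Fin N), μ B * ‖(∑ i ∈ B, g i) - m‖ ^ 2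
      ≤ ∑ i : Fin N, (b i - b i ^ 2) * ‖g i‖ ^ 2 := by
    -- ‖m‖² as double sum
    have hmm : ‖m‖ ^ 2 = ∑ i : Fin N, ∑ j : Fin N, (b i * b j) * ⟪g i, g j⟫ := by
      rw [← real_inner_self_eq_norm_sq, hm, sum_inner]
      refine Finset.sum_congr rfl fun i _ => ?_
      rw [real_inner_smul_left, inner_sum, Finset.mul_sum]
      refine Finset.sum_congr rfl fun j _ => ?_
      rw [real_inner_smul_right]; ring
    -- ⟪g i, m⟫ sum
    have hgm : ∀ i, ⟪g i, m⟫ = ∑ j : Fin N, b j * ⟪g i, g j⟫ := by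
      intro i
      rw [hm, inner_sum]
      exact Finset.sum_congr rfl fun j _ => real_inner_smul_right _ _ _
    -- expand each term
    have expand : ∀ B : Finset (Fin N), ‖(∑ i ∈ B, g i) - m‖ ^ 2 =
        (∑ i ∈ B, ∑ j ∈ B, ⟪g i, g j⟫) - 2 * (∑ i ∈ B, ⟪g i, m⟫) + ‖m‖ ^ 2 := by
      intro B
      rw [@norm_sub_sq_real, ← real_inner_self_eq_norm_sq (∑ i ∈ B, g i),
        sum_inner, sum_inner]
      congr 1
      · congr 1
        exact Finset.sum_congr rfl fun i _ => inner_sum _ _ _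
    -- indicator rewriting
    have ind1 : ∀ (B : Finset (Fin N)) (f : Fin N → ℝ),
        ∑ i ∈ B, f i = ∑ i : Fin N, if i ∈ B then f i else 0 := by
      intro B f
      rw [Finset.sum_ite_mem, Finset.univ_inter]
    -- E[⟪S_B, m⟫] = ‖m‖²
    have hT : ∑ B : Finset (Fin N), μ B * (∑ i ∈ B, ⟪g i, m⟫) = ‖m‖ ^ 2 := by
      have : ∑ B : Finset (Fin N), μ B * (∑ i ∈ B, ⟪g i, m⟫)
          = ∑ i : Fin N, b i * ⟪g i, m⟫ := by
        have h1 : ∀ B : Finset (Fin N), μ B * (∑ i ∈ B, ⟪g i, m⟫)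
            = ∑ i : Fin N, (if i ∈ B then μ B * ⟪g i, m⟫ else 0) := by
          intro B
          rw [Finset.mul_sum, ind1 B]
        rw [Finset.sum_congr rfl fun B _ => h1 B, Finset.sum_comm]
        refine Finset.sum_congr rfl fun i _ => ?_
        rw [hb i, Finset.sum_mul, Finset.sum_filter]
      rw [this, ← real_inner_self_eq_norm_sq, hm, sum_inner]
      refine Finset.sum_congr rfl fun i _ => ?_
      rw [real_inner_smul_left, real_inner_comm]
    -- E[⟪S_B, S_B⟫] = ∑ p i j ⟪g i, g j⟫
    have hA : ∑ B : Finset (Fin N), μ B * (∑ i ∈ B, ∑ j ∈ B, ⟪g i, g j⟫)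
        = ∑ i : Fin N, ∑ j : Fin N, p i j * ⟪g i, g j⟫ := by
      have step : ∀ B : Finset (Fin N), (∑ i ∈ B, ∑ j ∈ B, ⟪g i, g j⟫)
          = ∑ i : Fin N, ∑ j : Fin N,
            if i ∈ B ∧ j ∈ B then ⟪g i, g j⟫ else 0 := by
        intro B
        rw [ind1 B]
        refine Finset.sum_congr rfl fun i _ => ?_
        rw [ind1 B]
        by_cases h : i ∈ B <;> simp [h]
      simp_rw [step, Finset.mul_sum, mul_ite, mul_zero]
      rw [Finset.sum_comm]
      refine Finset.sum_congr rfl fun i _ => ?_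
      rw [Finset.sum_comm]
      refine Finset.sum_congr rfl fun j _ => ?_
      have hpij : p i j = ∑ B ∈ Finset.univ.filter (fun B => i ∈ B ∧ j ∈ B), μ B := by
        rw [hp]
      rw [hpij, Finset.sum_mul, Finset.sum_filter]
    -- assemble
    have total : ∑ B : Finset (Fin N), μ B * ‖(∑ i ∈ B, g i) - m‖ ^ 2
        = ∑ i : Fin N, ∑ j : Fin N, (p i j - b i * b j) * ⟪g i, g j⟫ := by
      simp_rw [expand, mul_add, mul_sub]
      rw [Finset.sum_add_distrib, Finset.sum_sub_distrib, ← Finset.sum_mul, hsum,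
        one_mul, hA]
      have : ∑ B : Finset (Fin N), μ B * (2 * ∑ i ∈ B, ⟪g i, m⟫)
          = 2 * ‖m‖ ^ 2 := by
        rw [← hT, Finset.mul_sum]
        refine Finset.sum_congr rfl fun B _ => by ring
      rw [this, hmm]
      have hac : ∀ a c : ℝ, a - 2 * c + c = a - c := fun a c => by ring
      rw [hac, ← Finset.sum_sub_distrib]
      refine Finset.sum_congr rfl fun i _ => ?_
      rw [← Finset.sum_sub_distrib]
      refine Finset.sum_congr rfl fun j _ => by ring
    rw [total]
    -- pointwise comparison
    refine Finset.sum_le_sum fun i _ => ?_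
    rw [← Finset.sum_erase_add _ _ (Finset.mem_univ i)]
    have hdiag : (p i i - b i * b i) * ⟪g i, g i⟫ = (b i - b i ^ 2) * ‖g i‖ ^ 2 := by
      have hpii : p i i = b i := by
        rw [hp, hb i]
        simp
      rw [hpii, real_inner_self_eq_norm_sq]; ring
    have hoff : ∑ j ∈ Finset.univ.erase i, (p i j - b i * b j) * ⟪g i, g j⟫ ≤ 0 := by
      refine Finset.sum_nonpos fun j hj => ?_
      have hij : i ≠ j := (Finset.ne_of_mem_erase hj).symm
      have hbi := hbpos i
      have hbj := hbpos j
      have hpC : p i j - b i * b j = (b i * b j) * C i j := by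
        rw [hC i j hij]
        simp only [hp]
        field_simp
      rw [hpC, mul_assoc]
      exact mul_nonpos_of_nonneg_of_nonpos (mul_pos hbi hbj).le (hneg i j hij)
    linarith [hoff, hdiag.le, hdiag.ge]
  -- reduce to key via 1/k factors
  have hfac : ∀ v : EuclideanSpace ℝ (Fin d),
      ‖(1 / (k : ℝ)) • v‖ ^ 2 = (1 / (k : ℝ) ^ 2) * ‖v‖ ^ 2 := by
    intro v
    rw [norm_smul, mul_pow, Real.norm_eq_abs, sq_abs]
    ring
  have : ∀ B : Finset (Fin N),
      μ B * ‖((1 / (k : ℝ)) • ∑ i ∈ B, g i) - ((1 / (k : ℝ)) • m)‖ ^ 2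
      = (1 / (k : ℝ) ^ 2) * (μ B * ‖(∑ i ∈ B, g i) - m‖ ^ 2) := by
    intro B
    rw [← smul_sub, hfac]; ring
  simp_rw [this]
  rw [← Finset.mul_sum]
  have hknn : (0:ℝ) ≤ 1 / (k : ℝ) ^ 2 := by positivity
  exact mul_le_mul_of_nonneg_left key hknn
end

section
/- For the strata indicator kernel L_ij = [H_i = H_j] with M strata each nonempty and k = M, the k-DPP assigns positive probability exactly to subsets Y containing exactly one index from each stratum, and conditional on that, all such subsets are equally likely (probability 1/∏_s |stratum s|). -/
/-- Determinant of the principal submatrix of `L` indexed by the finite set `A`. -/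
def pdet {N : ℕ} (L : Matrix (Fin N) (Fin N) ℝ) (A : Finset (Fin N)) : ℝ :=
  (L.submatrix (fun i : A => (i : Fin N)) (fun j : A => (j : Fin N))).det

open Finset

lemma pdet_one {N M : ℕ} (H : Fin N → Fin M) (L : Matrix (Fin N) (Fin N) ℝ)
    (hL : ∀ i j, L i j = if H i = H j then 1 else 0)
    (Y : Finset (Fin N)) (hinj : Set.InjOn H ↑Y) : pdet L Y = 1 := by
  have : (L.submatrix (fun i : Y => (i : Fin N)) (fun j : Y => (j : Fin N))) = 1 := by
    ext ⟨i, hi⟩ ⟨j, hj⟩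
    simp only [Matrix.submatrix_apply, hL, Matrix.one_apply]
    by_cases h : i = j
    · subst h; simp
    · have : H i ≠ H j := fun he => h (hinj hi hj he)
      simp [this, h, Subtype.mk.injEq]
  rw [pdet, this, Matrix.det_one]

lemma pdet_zero {N M : ℕ} (H : Fin N → Fin M) (L : Matrix (Fin N) (Fin N) ℝ)
    (hL : ∀ i j, L i j = if H i = H j then 1 else 0)
    (Y : Finset (Fin N)) (hinj : ¬ Set.InjOn H ↑Y) : pdet L Y = 0 := by
  simp only [Set.InjOn, not_forall] at hinj
  obtain ⟨i, hi, j, hj, hH, hne⟩ := hinj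
  refine Matrix.det_zero_of_row_eq (i := (⟨i, hi⟩ : Y)) (j := ⟨j, hj⟩)
    (fun h => hne (congrArg Subtype.val h)) ?_
  funext ⟨k, hk⟩
  simp [Matrix.submatrix_apply, hL, hH]

lemma sum_pdet {N M : ℕ} (H : Fin N → Fin M) (hsurj : Function.Surjective H)
    (L : Matrix (Fin N) (Fin N) ℝ)
    (hL : ∀ i j, L i j = if H i = H j then 1 else 0) :
    (∑ Y' ∈ Finset.powersetCard M (Finset.univ : Finset (Fin N)), pdet L Y') =
      ∏ s : Fin M, (((Finset.univ : Finset (Fin N)).filter (fun i => H i = s)).card : ℝ) := by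
  classical
  have step1 : (∑ Y' ∈ Finset.powersetCard M (Finset.univ : Finset (Fin N)), pdet L Y') =
      ∑ Y' ∈ Finset.powersetCard M (Finset.univ : Finset (Fin N)),
        (if Set.InjOn H (Y' : Set (Fin N)) then (1 : ℝ) else 0) := by
    refine Finset.sum_congr rfl (fun Y' hY' => ?_)
    by_cases h : Set.InjOn H (Y' : Set (Fin N))
    · rw [pdet_one H L hL Y' h, if_pos h]
    · rw [pdet_zero H L hL Y' h, if_neg h]
  rw [step1, Finset.sum_boole]
  have key : ((Finset.powersetCard M (Finset.univ : Finset (Fin N))).filter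
        (fun Y' : Finset (Fin N) => Set.InjOn H (Y' : Set (Fin N)))).card =
      ∏ s : Fin M, ((Finset.univ : Finset (Fin N)).filter (fun i => H i = s)).card := by
    rw [← Fintype.card_piFinset]
    symm
    refine Finset.card_bij (fun g _ => Finset.image g Finset.univ) ?_ ?_ ?_
    · intro g hg
      simp only [Fintype.mem_piFinset, Finset.mem_filter, Finset.mem_univ, true_and] at hg
      have hginj : Function.Injective g := by
        intro a b hab
        have := congrArg H hab
        rwa [hg a, hg b] at this
      simp only [Finset.mem_filter, Finset.mem_powersetCard]
      refine ⟨⟨Finset.subset_univ _, ?_⟩, ?_⟩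
      · rw [Finset.card_image_of_injective _ hginj, Finset.card_univ, Fintype.card_fin]
      · intro i hi j hj hij
        simp only [Finset.coe_image, Set.mem_image] at hi hj
        obtain ⟨a, _, rfl⟩ := hi
        obtain ⟨b, _, rfl⟩ := hj
        rw [hg a, hg b] at hij
        rw [hij]
    · intro g hg g' hg' he
      simp only [Fintype.mem_piFinset, Finset.mem_filter, Finset.mem_univ, true_and] at hg hg'
      have he' : Finset.image g Finset.univ = Finset.image g' Finset.univ := he
      funext s
      have : g s ∈ Finset.image g' Finset.univ := by
        rw [← he']; exact Finset.mem_image_of_mem g (Finset.mem_univ s)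
      obtain ⟨t, _, ht⟩ := Finset.mem_image.mp this
      have : t = s := by rw [← hg' t, ht, hg s]
      rw [← ht, this]
    · intro Y' hY'
      simp only [Finset.mem_filter, Finset.mem_powersetCard] at hY'
      obtain ⟨⟨_, hcard⟩, hinj⟩ := hY'
      have himg : Finset.image H Y' = Finset.univ := by
        apply Finset.eq_univ_of_card
        rw [Finset.card_image_of_injOn hinj, hcard, Fintype.card_fin]
      have hex : ∀ s : Fin M, ∃ i, i ∈ Y' ∧ H i = s := by
        intro s
        have : s ∈ Finset.image H Y' := himg ▸ Finset.mem_univ s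
        obtain ⟨i, hi, hHi⟩ := Finset.mem_image.mp this
        exact ⟨i, hi, hHi⟩
      refine ⟨fun s => (hex s).choose, ?_, ?_⟩
      · simp only [Fintype.mem_piFinset, Finset.mem_filter, Finset.mem_univ, true_and]
        exact fun s => (hex s).choose_spec.2
      · have hsub : Finset.image (fun s => (hex s).choose) Finset.univ ⊆ Y' := by
          intro i hi
          obtain ⟨s, _, rfl⟩ := Finset.mem_image.mp hi
          exact (hex s).choose_spec.1
        have hginj : Function.Injective (fun s => (hex s).choose) := by
          intro a b hab
          have := congrArg H hab
          rwa [(hex a).choose_spec.2, (hex b).choose_spec.2] at this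
        apply Finset.eq_of_subset_of_card_le hsub
        rw [Finset.card_image_of_injective _ hginj, Finset.card_univ, Fintype.card_fin, hcard]
  rw [key]
  push_cast
  ring

theorem stmt_18 {N M : ℕ} (H : Fin N → Fin M) (hsurj : Function.Surjective H)
    (L : Matrix (Fin N) (Fin N) ℝ)
    (hL : ∀ i j, L i j = if H i = H j then 1 else 0)
    (Y : Finset (Fin N)) (hY : Y.card = M) :
    (Set.InjOn H ↑Y → pdet L Y = 1) ∧
    (¬ Set.InjOn H ↑Y → pdet L Y = 0) ∧
    (Set.InjOn H ↑Y →
      pdet L Y /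
        (∑ Y' ∈ Finset.powersetCard M (Finset.univ : Finset (Fin N)), pdet L Y') =
      (∏ s : Fin M,
        (((Finset.univ : Finset (Fin N)).filter (fun i => H i = s)).card : ℝ))⁻¹) ∧
    (¬ Set.InjOn H ↑Y →
      pdet L Y /
        (∑ Y' ∈ Finset.powersetCard M (Finset.univ : Finset (Fin N)), pdet L Y') =
      0) := by
  classical
  refine ⟨pdet_one H L hL Y, pdet_zero H L hL Y, ?_, ?_⟩
  · intro hinj
    rw [pdet_one H L hL Y hinj, sum_pdet H hsurj L hL, one_div]
  · intro hinj
    rw [pdet_zero H L hL Y hinj, zero_div]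
end
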